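/- (Outer-loop complexity, convex case: stationarity.) Let f : ℝ^p → ℝ be convex, κ > 0, and let x* be a minimizer of f. Let (α_k)_{k ≥ 1} satisfy α_1 = 1, α_k ∈ (0,1] and (1 − α_{k+1})/α_{k+1}² = 1/α_k² for all k ≥ 1. Suppose sequences (x_k)_{k ≥ 0}, (v_k)_{k ≥ 0}, (y_k)_{k ≥ 1}, (x̄_k)_{k ≥ 1}, (x̃_k)_{k ≥ 1} in ℝ^p satisfy v_0 = x_0 and, for every k ≥ 1: (i) there exists w_k ∈ ∂(f_κ(·; x_{k−1}))(x̄_k) with ‖w_k‖ ≤ κ‖x̄_k − x_{k−1}‖, and f(x̄_k) + (κ/2)‖x̄_k − x_{k−1}‖² ≤ f(x_{k−1}); (ii) y_k = α_k v_{k−1} + (1 − α_k) x_{k−1}; (iii) there exists ξ_k ∈ ∂(f_κ(·; y_k))(x̃_k) with ‖ξ_k‖ ≤ (κ/(k+1))·‖x̃_k − y_k‖; (iv) v_k = x_{k−1} + (1/α_k)(x̃_k − x_{k−1}); (v) f(x_k) ≤ min(f(x̄_k), f(x̃_k)). Then for every integer N ≥ 1 there exist an index j with 1 ≤ j ≤ 2N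 and a subgradient w ∈ ∂f(x̄_j) such that ‖w‖² ≤ (32κ²/(N(N+1)²))·‖x* − x_0‖². -/

import Mathlib

/-- `v` is a subgradient (in the sense of convex analysis) of `g` at `x`:
`g y ≥ g x + ⟨v, y − x⟩` for all `y`. -/
def CSubgradAt {p : ℕ} (g : EuclideanSpace ℝ (Fin p) → ℝ)
    (v x : EuclideanSpace ℝ (Fin p)) : Prop :=
  ∀ y : EuclideanSpace ℝ (Fin p), g x + (inner ℝ v (y - x) : ℝ) ≤ g y

lemma young_aux {κ t a A B : ℝ} (hκ : 0 < κ) (ht : 0 < t) :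
    a * (κ / t) * (A * B) ≤ κ / 2 * A ^ 2 + κ * a ^ 2 / (2 * t ^ 2) * B ^ 2 := by
  have key : κ / 2 * A ^ 2 + κ * a ^ 2 / (2 * t ^ 2) * B ^ 2 - a * (κ / t) * (A * B)
      = κ / (2 * t ^ 2) * (t * A - a * B) ^ 2 := by
    field_simp
    ring
  nlinarith [mul_nonneg (le_of_lt (by positivity : (0:ℝ) < κ / (2 * t ^ 2)))
    (sq_nonneg (t * A - a * B))]

lemma csubgrad_shift {p : ℕ} (f : EuclideanSpace ℝ (Fin p) → ℝ)
    (hf : ConvexOn ℝ Set.univ f) {κ : ℝ} (hκ : 0 < κ)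
    (c w xx : EuclideanSpace ℝ (Fin p))
    (h : CSubgradAt (fun z => f z + κ / 2 * ‖z - c‖ ^ 2) w xx) :
    CSubgradAt f (w - κ • (xx - c)) xx := by
  intro u
  have hlin : (inner ℝ (w - κ • (xx - c)) (u - xx) : ℝ)
      = inner ℝ w (u - xx) - κ * inner ℝ (xx - c) (u - xx) := by
    rw [inner_sub_left, real_inner_smul_left]
  rw [hlin]
  have hQ : (0:ℝ) ≤ κ / 2 * ‖u - xx‖ ^ 2 := by positivity
  rw [← sub_nonneg, ← neg_nonpos]
  apply le_of_forall_pos_le_add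
  intro ε hε
  set Q : ℝ := κ / 2 * ‖u - xx‖ ^ 2 with hQdef
  set t : ℝ := min 1 (ε / (Q + 1)) with htdef
  have ht0 : 0 < t := lt_min one_pos (div_pos hε (by linarith))
  have ht1 : t ≤ 1 := min_le_left _ _
  have htε : t * Q ≤ ε := by
    have h1 : t ≤ ε / (Q + 1) := min_le_right _ _
    have h2 : t * Q ≤ (ε / (Q + 1)) * Q := mul_le_mul_of_nonneg_right h1 hQ
    have h3 : (ε / (Q + 1)) * Q ≤ ε := by
      rw [div_mul_eq_mul_div, div_le_iff₀ (by linarith : (0:ℝ) < Q + 1)]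
      nlinarith
    linarith
  have h1 := h (xx + t • (u - xx))
  simp only at h1
  have hconv : f (xx + t • (u - xx)) ≤ (1 - t) * f xx + t * f u := by
    have h2 := hf.2 (Set.mem_univ xx) (Set.mem_univ u)
      (by linarith : (0:ℝ) ≤ 1 - t) ht0.le (by ring)
    have hxy : (1 - t) • xx + t • u = xx + t • (u - xx) := by module
    rwa [hxy] at h2
  have hq : ‖xx + t • (u - xx) - c‖ ^ 2
      = ‖xx - c‖ ^ 2 + 2 * (t * inner ℝ (xx - c) (u - xx)) + t ^ 2 * ‖u - xx‖ ^ 2 := by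
    have h2 : xx + t • (u - xx) - c = (xx - c) + t • (u - xx) := by abel
    rw [h2, norm_add_sq_real, real_inner_smul_right, norm_smul, mul_pow,
      Real.norm_eq_abs, sq_abs]
  have hinn : (inner ℝ w (xx + t • (u - xx) - xx) : ℝ) = t * inner ℝ w (u - xx) := by
    have h2 : xx + t • (u - xx) - xx = t • (u - xx) := by abel
    rw [h2, real_inner_smul_right]
  rw [hq, hinn] at h1
  have hdiv : (inner ℝ w (u - xx) : ℝ)
      ≤ f u - f xx + κ * inner ℝ (xx - c) (u - xx) + t * Q := by
    have h2 : t * (inner ℝ w (u - xx) : ℝ)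
        ≤ t * (f u - f xx + κ * inner ℝ (xx - c) (u - xx) + t * Q) := by
      have h3 : t * (f u - f xx + κ * inner ℝ (xx - c) (u - xx) + t * Q)
          = t * f u - t * f xx + κ * (t * inner ℝ (xx - c) (u - xx))
            + κ / 2 * (t ^ 2 * ‖u - xx‖ ^ 2) := by
        rw [hQdef]; ring
      rw [h3]
      nlinarith [h1, hconv]
    exact le_of_mul_le_mul_left h2 ht0
  linarith

lemma step_lemma {p : ℕ} (f : EuclideanSpace ℝ (Fin p) → ℝ)
    (hf : ConvexOn ℝ Set.univ f) {κ : ℝ} (hκ : 0 < κ)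
    (xstar : EuclideanSpace ℝ (Fin p))
    (k : ℕ) (hk : 1 ≤ k) (a : ℝ) (ha0 : 0 < a) (ha1 : a ≤ 1)
    (xm vm yk xt vk : EuclideanSpace ℝ (Fin p)) (xk : ℝ)
    (ξ : EuclideanSpace ℝ (Fin p))
    (hξsub : CSubgradAt (fun z => f z + κ / 2 * ‖z - yk‖ ^ 2) ξ xt)
    (hξnorm : ‖ξ‖ ≤ κ / ((k : ℝ) + 1) * ‖xt - yk‖)
    (hyk : yk = a • vm + (1 - a) • xm)
    (hvk : vk = xm + a⁻¹ • (xt - xm))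
    (hxk : xk ≤ f xt) :
    xk - f xstar + κ * a ^ 2 / 2 * ‖xstar - vk‖ ^ 2
      ≤ (1 - a) * (f xm - f xstar) + κ * a ^ 2 / 2 * ‖xstar - vm‖ ^ 2
        + κ * a ^ 2 / (2 * ((k : ℝ) + 1) ^ 2) * ‖xstar - vk‖ ^ 2 := by
  have hξ' : CSubgradAt f (ξ - κ • (xt - yk)) xt :=
    csubgrad_shift f hf hκ yk ξ xt hξsub
  set z := a • xstar + (1 - a) • xm with hzdef
  have hvx : xt - xm = a • (vk - xm) := by
    rw [hvk, add_sub_cancel_left, smul_smul, mul_inv_cancel₀ (ne_of_gt ha0), one_smul]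
  have hxteq : xt = xm + a • (vk - xm) := by rw [← hvx]; abel
  have hzx : z - xt = a • (xstar - vk) := by
    rw [hzdef, hxteq]; module
  have hzy : z - yk = a • (xstar - vm) := by
    rw [hzdef, hyk]; module
  have e1 : a • (xstar - vm) = a • (xstar - vk) + (xt - yk) := by
    rw [← hzy, ← hzx]; abel
  have e2 : ‖a • (xstar - vm)‖ ^ 2 = ‖a • (xstar - vk)‖ ^ 2
      + 2 * inner ℝ (a • (xstar - vk)) (xt - yk) + ‖xt - yk‖ ^ 2 := by
    rw [e1, norm_add_sq_real]
  have e3 : ∀ u : EuclideanSpace ℝ (Fin p), ‖a • u‖ ^ 2 = a ^ 2 * ‖u‖ ^ 2 := by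
    intro u; rw [norm_smul, mul_pow, Real.norm_eq_abs, sq_abs]
  rw [e3, e3, real_inner_smul_left] at e2
  have hs := hξ' z
  have hs1 : (inner ℝ (ξ - κ • (xt - yk)) (z - xt) : ℝ)
      = a * inner ℝ ξ (xstar - vk) - κ * (a * inner ℝ (xstar - vk) (xt - yk)) := by
    rw [hzx, inner_sub_left, real_inner_smul_right, real_inner_smul_left,
      real_inner_smul_right]
    rw [real_inner_comm (xt - yk) (xstar - vk)]
  rw [hs1] at hs
  have hconvz : f z ≤ a * f xstar + (1 - a) * f xm := by
    have h2 := hf.2 (Set.mem_univ xstar) (Set.mem_univ xm)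
      ha0.le (by linarith : (0:ℝ) ≤ 1 - a) (by ring)
    rwa [hzdef]
  have hcs : -(inner ℝ ξ (xstar - vk) : ℝ) ≤ ‖ξ‖ * ‖xstar - vk‖ := by
    have h3 := abs_real_inner_le_norm ξ (xstar - vk)
    have h4 := neg_abs_le (inner ℝ ξ (xstar - vk) : ℝ)
    linarith
  have hAB : ‖ξ‖ * ‖xstar - vk‖ ≤ κ / ((k:ℝ) + 1) * ‖xt - yk‖ * ‖xstar - vk‖ :=
    mul_le_mul_of_nonneg_right hξnorm (norm_nonneg _)
  have hE4 : a * (-(inner ℝ ξ (xstar - vk) : ℝ)) ≤ a * (‖ξ‖ * ‖xstar - vk‖) :=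
    mul_le_mul_of_nonneg_left hcs ha0.le
  have hE5 : a * (‖ξ‖ * ‖xstar - vk‖)
      ≤ a * (κ / ((k:ℝ) + 1) * ‖xt - yk‖ * ‖xstar - vk‖) :=
    mul_le_mul_of_nonneg_left hAB ha0.le
  have hY := young_aux (κ := κ) (t := ((k:ℝ) + 1)) (a := a)
    (A := ‖xt - yk‖) (B := ‖xstar - vk‖) hκ (by positivity)
  have hnid2 : κ * (a * (inner ℝ (xstar - vk) (xt - yk) : ℝ))
      = κ / 2 * (a ^ 2 * ‖xstar - vm‖ ^ 2) - κ / 2 * (a ^ 2 * ‖xstar - vk‖ ^ 2)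
        - κ / 2 * ‖xt - yk‖ ^ 2 := by
    linear_combination (-(κ / 2)) * e2
  linarith [hs, hconvz, hE4, hE5, hY, hnid2, hxk]

set_option maxHeartbeats 2000000 in
/-- Outer-loop complexity, convex case: stationarity. -/
theorem outer_loop_complexity_convex_stationarity (p : ℕ) (hp : 0 < p)
    (f : EuclideanSpace ℝ (Fin p) → ℝ) (hf : ConvexOn ℝ Set.univ f)
    (κ : ℝ) (hκ : 0 < κ)
    (xstar : EuclideanSpace ℝ (Fin p)) (hxstar : ∀ z, f xstar ≤ f z)
    (α : ℕ → ℝ) (hα1 : α 1 = 1)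
    (hαmem : ∀ k : ℕ, 1 ≤ k → α k ∈ Set.Ioc (0 : ℝ) 1)
    (hαrec : ∀ k : ℕ, 1 ≤ k → (1 - α (k + 1)) / (α (k + 1)) ^ 2 = 1 / (α k) ^ 2)
    (x v y xbar xtil : ℕ → EuclideanSpace ℝ (Fin p))
    (hv0 : v 0 = x 0)
    (hprox : ∀ k : ℕ, 1 ≤ k → (∃ w : EuclideanSpace ℝ (Fin p),
      CSubgradAt (fun z => f z + κ / 2 * ‖z - x (k - 1)‖ ^ 2) w (xbar k) ∧
        ‖w‖ ≤ κ * ‖xbar k - x (k - 1)‖) ∧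
      f (xbar k) + κ / 2 * ‖xbar k - x (k - 1)‖ ^ 2 ≤ f (x (k - 1)))
    (hy : ∀ k : ℕ, 1 ≤ k → y k = α k • v (k - 1) + (1 - α k) • x (k - 1))
    (hxtil : ∀ k : ℕ, 1 ≤ k → ∃ ξ : EuclideanSpace ℝ (Fin p),
      CSubgradAt (fun z => f z + κ / 2 * ‖z - y k‖ ^ 2) ξ (xtil k) ∧
        ‖ξ‖ ≤ κ / ((k : ℝ) + 1) * ‖xtil k - y k‖)
    (hvk : ∀ k : ℕ, 1 ≤ k → v k = x (k - 1) + (α k)⁻¹ • (xtil k - x (k - 1)))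
    (hbest : ∀ k : ℕ, 1 ≤ k → f (x k) ≤ min (f (xbar k)) (f (xtil k))) :
    ∀ N : ℕ, 1 ≤ N → ∃ j : ℕ, 1 ≤ j ∧ j ≤ 2 * N ∧
      ∃ w : EuclideanSpace ℝ (Fin p), CSubgradAt f w (xbar j) ∧
        ‖w‖ ^ 2 ≤ 32 * κ ^ 2 / ((N : ℝ) * ((N : ℝ) + 1) ^ 2) * ‖xstar - x 0‖ ^ 2 := by
  intro N hN
  have hN' : (0:ℝ) < (N:ℝ) := by exact_mod_cast hN
  set fstar := f xstar with hfstardef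
  set R := ‖xstar - x 0‖ ^ 2 with hRdef
  have hR : 0 ≤ R := sq_nonneg _
  have hδ : ∀ k, 0 ≤ f (x k) - fstar := fun k => sub_nonneg.mpr (hxstar (x k))
  -- per-step inequality
  have step : ∀ k : ℕ, 1 ≤ k →
      f (x k) - fstar + κ * (α k) ^ 2 / 2 * ‖xstar - v k‖ ^ 2
        ≤ (1 - α k) * (f (x (k - 1)) - fstar)
          + κ * (α k) ^ 2 / 2 * ‖xstar - v (k - 1)‖ ^ 2
          + κ * (α k) ^ 2 / (2 * ((k : ℝ) + 1) ^ 2) * ‖xstar - v k‖ ^ 2 := by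
    intro k hk
    obtain ⟨ξ, h1, h2⟩ := hxtil k hk
    exact step_lemma f hf hκ xstar k hk (α k) (hαmem k hk).1 (hαmem k hk).2
      (x (k-1)) (v (k-1)) (y k) (xtil k) (v k) (f (x k)) ξ h1 h2 (hy k hk) (hvk k hk)
      ((hbest k hk).trans (min_le_right _ _))
  -- the Lyapunov sequence
  set Bv : ℕ → ℝ := fun k => if k = 0 then κ / 2 * R
    else (f (x k) - fstar) / (α k) ^ 2 + κ / 2 * ‖xstar - v k‖ ^ 2 with hBvdef
  have hBv0 : Bv 0 = κ / 2 * R := by simp [hBvdef]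
  have hBvk : ∀ k : ℕ, 1 ≤ k →
      Bv k = (f (x k) - fstar) / (α k) ^ 2 + κ / 2 * ‖xstar - v k‖ ^ 2 := by
    intro k hk
    have : k ≠ 0 := by omega
    simp [hBvdef, this]
  have hBvnn : ∀ k : ℕ, 0 ≤ Bv k := by
    intro k
    rcases Nat.eq_zero_or_pos k with h | h
    · subst h; rw [hBv0]; positivity
    · rw [hBvk k h]
      have h1 : 0 ≤ (f (x k) - fstar) / (α k) ^ 2 := div_nonneg (hδ k) (sq_nonneg _)
      have h2 : (0:ℝ) ≤ κ / 2 * ‖xstar - v k‖ ^ 2 := by positivity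
      linarith
  -- recursion
  have hrec : ∀ k : ℕ, 1 ≤ k → (1 - 1 / ((k:ℝ) + 1) ^ 2) * Bv k ≤ Bv (k - 1) := by
    intro k hk
    have hst := step k hk
    have ha := hαmem k hk
    have ha0 : (0:ℝ) < α k := ha.1
    have hBk := hBvk k hk
    have hquarter : κ / (2 * ((k:ℝ) + 1) ^ 2) * ‖xstar - v k‖ ^ 2
        ≤ (1 / ((k:ℝ) + 1) ^ 2) * Bv k := by
      have hYpos : (0:ℝ) < ((k:ℝ) + 1) ^ 2 := by positivity
      have hq0 : κ / 2 * ‖xstar - v k‖ ^ 2 ≤ Bv k := by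
        rw [hBk]
        have := div_nonneg (hδ k) (sq_nonneg (α k))
        linarith
      have h1 : κ / (2 * ((k:ℝ) + 1) ^ 2) * ‖xstar - v k‖ ^ 2
          = (κ / 2 * ‖xstar - v k‖ ^ 2) / ((k:ℝ) + 1) ^ 2 := by
        rw [mul_div_right_comm, div_div]
      have h2 : (1 / ((k:ℝ) + 1) ^ 2) * Bv k = Bv k / ((k:ℝ) + 1) ^ 2 :=
        one_div_mul_eq_div _ _
      rw [h1, h2]
      exact (div_le_div_iff_of_pos_right hYpos).mpr hq0
    have hdiv : (f (x k) - fstar) / (α k) ^ 2 + κ / 2 * ‖xstar - v k‖ ^ 2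
        ≤ Bv (k - 1) + κ / (2 * ((k:ℝ) + 1) ^ 2) * ‖xstar - v k‖ ^ 2 := by
      have ha2 : (0:ℝ) < (α k) ^ 2 := by positivity
      have hx1 : f (x k) - fstar = (α k) ^ 2 * ((f (x k) - fstar) / (α k) ^ 2) := by
        field_simp
      have hane : α k ≠ 0 := ne_of_gt ha0
      rcases Nat.lt_or_ge k 2 with hk2 | hk2
      · -- k = 1
        have hk1 : k = 1 := by omega
        subst hk1
        have hst1 := hst
        rw [hα1] at hst1
        simp only [Nat.sub_self] at hst1
        rw [hv0] at hst1
        rw [hBv0, hα1]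
        have hRe : R = ‖xstar - x 0‖ ^ 2 := hRdef
        rw [hRe]
        norm_num at hst1 ⊢
        linarith [hst1]
      · -- k ≥ 2
        have hk1 : 1 ≤ k - 1 := by omega
        have hkk : k - 1 + 1 = k := by omega
        have hrat := hαrec (k - 1) hk1
        rw [hkk] at hrat
        have ham := hαmem (k - 1) hk1
        have ham0 : (0:ℝ) < α (k - 1) := ham.1
        have hamne : α (k - 1) ≠ 0 := ne_of_gt ham0
        have e : (1 - α k) * (f (x (k - 1)) - fstar)
            = (α k) ^ 2 * ((f (x (k - 1)) - fstar) / (α (k - 1)) ^ 2) := by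
          have h5 : (1 - α k) = (α k) ^ 2 * (1 / (α (k - 1)) ^ 2) := by
            rw [← hrat]
            field_simp
          rw [h5]; ring
        rw [hBvk (k - 1) hk1]
        have h6 : (α k) ^ 2 * ((f (x k) - fstar) / (α k) ^ 2 + κ / 2 * ‖xstar - v k‖ ^ 2)
            ≤ (α k) ^ 2 * ((f (x (k - 1)) - fstar) / (α (k - 1)) ^ 2
              + κ / 2 * ‖xstar - v (k - 1)‖ ^ 2
              + κ / (2 * ((k:ℝ) + 1) ^ 2) * ‖xstar - v k‖ ^ 2) := by
          have hA : (α k) ^ 2 * ((f (x k) - fstar) / (α k) ^ 2 + κ / 2 * ‖xstar - v k‖ ^ 2)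
              = (f (x k) - fstar) + κ * (α k) ^ 2 / 2 * ‖xstar - v k‖ ^ 2 := by
            field_simp
          have hB : (α k) ^ 2 * ((f (x (k - 1)) - fstar) / (α (k - 1)) ^ 2
                + κ / 2 * ‖xstar - v (k - 1)‖ ^ 2
                + κ / (2 * ((k:ℝ) + 1) ^ 2) * ‖xstar - v k‖ ^ 2)
              = (1 - α k) * (f (x (k - 1)) - fstar)
                + κ * (α k) ^ 2 / 2 * ‖xstar - v (k - 1)‖ ^ 2
                + κ * (α k) ^ 2 / (2 * ((k:ℝ) + 1) ^ 2) * ‖xstar - v k‖ ^ 2 := by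
            rw [mul_add, mul_add, ← e]
            ring
          rw [hA, hB]
          exact hst
        have h7 := le_of_mul_le_mul_left h6 ha2
        linarith
    rw [hBk] at hquarter ⊢
    linarith [hdiv, hquarter]
  -- product bound by induction
  have hprod : ∀ k : ℕ, 1 ≤ k → ((k:ℝ) + 2) / (2 * ((k:ℝ) + 1)) * Bv k ≤ Bv 0 := by
    intro k hk
    induction k with
    | zero => omega
    | succ n ih =>
      rcases Nat.lt_or_ge n 1 with hn | hn
      · have hn0 : n = 0 := by omega
        subst hn0
        have h1 := hrec 1 le_rfl
        norm_num at h1 ⊢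
        linarith
      · have ihn := ih hn
        have hrn := hrec (n + 1) (by omega)
        have hns : (n + 1 : ℕ) - 1 = n := by omega
        rw [hns] at hrn
        have hn' : (0:ℝ) < (n:ℝ) + 1 := by positivity
        have hco : ((↑(n+1):ℝ) + 2) / (2 * ((↑(n+1):ℝ) + 1))
            = ((n:ℝ) + 2) / (2 * ((n:ℝ) + 1)) * (1 - 1 / ((↑(n+1):ℝ) + 1) ^ 2) := by
          push_cast
          field_simp
          ring
        have hPn : (0:ℝ) ≤ ((n:ℝ) + 2) / (2 * ((n:ℝ) + 1)) := by positivity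
        calc ((↑(n+1):ℝ) + 2) / (2 * ((↑(n+1):ℝ) + 1)) * Bv (n + 1)
            = ((n:ℝ) + 2) / (2 * ((n:ℝ) + 1))
              * ((1 - 1 / ((↑(n+1):ℝ) + 1) ^ 2) * Bv (n + 1)) := by
              rw [hco]; ring
          _ ≤ ((n:ℝ) + 2) / (2 * ((n:ℝ) + 1)) * Bv n :=
              mul_le_mul_of_nonneg_left hrn hPn
          _ ≤ Bv 0 := ihn
  -- Bv N ≤ 2 Bv 0
  have hBN : Bv N ≤ κ * R := by
    have hpN := hprod N hN
    have hc : (1:ℝ) / 2 ≤ ((N:ℝ) + 2) / (2 * ((N:ℝ) + 1)) := by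
      rw [div_le_div_iff₀ (by norm_num) (by positivity)]
      linarith
    have h1 : (1:ℝ) / 2 * Bv N ≤ ((N:ℝ) + 2) / (2 * ((N:ℝ) + 1)) * Bv N :=
      mul_le_mul_of_nonneg_right hc (hBvnn N)
    rw [hBv0] at hpN
    linarith
  -- lower bound on 1/α
  have htα : ∀ k : ℕ, 1 ≤ k → ((k:ℝ) + 1) / 2 ≤ 1 / α k := by
    intro k hk
    induction k with
    | zero => omega
    | succ n ih =>
      rcases Nat.lt_or_ge n 1 with hn | hn
      · have hn0 : n = 0 := by omega
        subst hn0
        rw [hα1]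
        norm_num
      · have ihn := ih hn
        have hrat := hαrec n hn
        have hb := hαmem (n + 1) (by omega)
        have hb0 : (0:ℝ) < α (n + 1) := hb.1
        have hbn := hαmem n hn
        have hbn0 : (0:ℝ) < α n := hbn.1
        have ht1 : (1:ℝ) ≤ 1 / α (n + 1) := by
          rw [le_div_iff₀ hb0]; linarith [hb.2]
        have hs1 : (1:ℝ) ≤ 1 / α n := by
          rw [le_div_iff₀ hbn0]; linarith [hbn.2]
        have h5 : (1 / α (n + 1)) ^ 2 - 1 / α (n + 1) = (1 / α n) ^ 2 := by
          have hbne : α (n + 1) ≠ 0 := ne_of_gt hb0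
          have hnne : α n ≠ 0 := ne_of_gt hbn0
          rw [div_pow, div_pow, one_pow, ← hrat]
          field_simp
        have key : 1 / α n + 1 / 2 ≤ 1 / α (n + 1) := by
          have h6 : (1 / α n) ^ 2 ≤ (1 / α (n + 1) - 1 / 2) ^ 2 := by nlinarith [h5, ht1]
          have h7 : (0:ℝ) ≤ 1 / α (n + 1) - 1 / 2 := by linarith
          have h8 : (0:ℝ) ≤ 1 / α n := by linarith
          have h9 := (pow_le_pow_iff_left₀ h8 h7 two_ne_zero).mp h6
          linarith
        push_cast
        linarith
  -- function value bound at N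
  have hfN : f (x N) - fstar ≤ 4 * κ / ((N:ℝ) + 1) ^ 2 * R := by
    have hBvN := hBvk N hN
    have haN := hαmem N hN
    have haN0 : (0:ℝ) < α N := haN.1
    have h2 : (f (x N) - fstar) / (α N) ^ 2 ≤ κ * R := by
      have h3 : (0:ℝ) ≤ κ / 2 * ‖xstar - v N‖ ^ 2 := by positivity
      rw [hBvN] at hBN
      linarith
    have htN := htα N hN
    have h3 : α N ≤ 2 / ((N:ℝ) + 1) := by
      rw [le_div_iff₀ (by positivity : (0:ℝ) < (N:ℝ) + 1)]
      have hinv : α N * (1 / α N) = 1 := by field_simp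
      have h9 : α N * (((N:ℝ) + 1) / 2) ≤ α N * (1 / α N) :=
        mul_le_mul_of_nonneg_left htN haN0.le
      rw [hinv] at h9
      linarith
    have h4 : (α N) ^ 2 ≤ 4 / ((N:ℝ) + 1) ^ 2 := by
      have h5 := pow_le_pow_left₀ haN0.le h3 2
      have h6 : (2 / ((N:ℝ) + 1)) ^ 2 = 4 / ((N:ℝ) + 1) ^ 2 := by
        rw [div_pow]; norm_num
      rw [h6] at h5
      exact h5
    have h7 : f (x N) - fstar = (α N) ^ 2 * ((f (x N) - fstar) / (α N) ^ 2) := by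
      field_simp
    calc f (x N) - fstar = (α N) ^ 2 * ((f (x N) - fstar) / (α N) ^ 2) := h7
      _ ≤ (α N) ^ 2 * (κ * R) := mul_le_mul_of_nonneg_left h2 (sq_nonneg _)
      _ ≤ 4 / ((N:ℝ) + 1) ^ 2 * (κ * R) :=
          mul_le_mul_of_nonneg_right h4 (by positivity)
      _ = 4 * κ / ((N:ℝ) + 1) ^ 2 * R := by ring
  -- select a good index
  have hexi : ∃ i ∈ Finset.range N,
      f (x (N + i)) - f (x (N + (i + 1))) ≤ (f (x N) - fstar) / (N:ℝ) := by
    by_contra hcon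
    push_neg at hcon
    have hlt : ∀ i ∈ Finset.range N,
        (f (x N) - fstar) / (N:ℝ) < f (x (N + i)) - f (x (N + (i + 1))) := hcon
    have hsum := Finset.sum_lt_sum_of_nonempty
      (Finset.nonempty_range_iff.mpr (by omega)) hlt
    rw [Finset.sum_const, Finset.card_range, nsmul_eq_mul] at hsum
    have htel : ∑ i ∈ Finset.range N, (f (x (N + i)) - f (x (N + (i + 1))))
        = f (x (N + 0)) - f (x (N + N)) :=
      Finset.sum_range_sub' (fun i => f (x (N + i))) N
    rw [htel, Nat.add_zero] at hsum
    have hle : fstar ≤ f (x (N + N)) := hxstar _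
    have hns : (N:ℝ) * ((f (x N) - fstar) / (N:ℝ)) = f (x N) - fstar := by
      field_simp
    rw [hns] at hsum
    linarith
  obtain ⟨i, hi, hgap⟩ := hexi
  have hiN := Finset.mem_range.mp hi
  refine ⟨N + i + 1, by omega, by omega, ?_⟩
  set j := N + i + 1 with hjdef
  have hj1 : 1 ≤ j := by omega
  have hjm : j - 1 = N + i := by omega
  obtain ⟨⟨w, hwsub, hwnorm⟩, hwdec⟩ := hprox j hj1
  refine ⟨w - κ • (xbar j - x (j - 1)),
    csubgrad_shift f hf hκ (x (j - 1)) w (xbar j) hwsub, ?_⟩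
  set D := ‖xbar j - x (j - 1)‖ with hDdef
  have hDn : 0 ≤ D := norm_nonneg _
  have hw2 : ‖w - κ • (xbar j - x (j - 1))‖ ≤ 2 * κ * D := by
    calc ‖w - κ • (xbar j - x (j - 1))‖
        ≤ ‖w‖ + ‖κ • (xbar j - x (j - 1))‖ := norm_sub_le _ _
      _ = ‖w‖ + κ * D := by rw [norm_smul, Real.norm_eq_abs, abs_of_pos hκ]
      _ ≤ κ * D + κ * D := by linarith [hwnorm]
      _ = 2 * κ * D := by ring
  have hsq : ‖w - κ • (xbar j - x (j - 1))‖ ^ 2 ≤ 4 * κ ^ 2 * D ^ 2 := by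
    nlinarith [norm_nonneg (w - κ • (xbar j - x (j - 1))), hw2]
  have hdec2 : κ / 2 * D ^ 2 ≤ f (x (j - 1)) - f (x j) := by
    have h2 : f (x j) ≤ f (xbar j) := (hbest j hj1).trans (min_le_left _ _)
    linarith [hwdec]
  have hgap2 : f (x (j - 1)) - f (x j) ≤ (f (x N) - fstar) / (N:ℝ) := by
    rw [hjm, show j = N + (i + 1) by omega]
    exact hgap
  have hfinal : (f (x N) - fstar) / (N:ℝ) ≤ (4 * κ / ((N:ℝ) + 1) ^ 2 * R) / (N:ℝ) := by
    exact div_le_div_of_nonneg_right hfN hN'.le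
  calc ‖w - κ • (xbar j - x (j - 1))‖ ^ 2 ≤ 4 * κ ^ 2 * D ^ 2 := hsq
    _ = 8 * κ * (κ / 2 * D ^ 2) := by ring
    _ ≤ 8 * κ * ((f (x N) - fstar) / (N:ℝ)) := by
        apply mul_le_mul_of_nonneg_left _ (by positivity : (0:ℝ) ≤ 8 * κ)
        linarith [hdec2, hgap2]
    _ ≤ 8 * κ * ((4 * κ / ((N:ℝ) + 1) ^ 2 * R) / (N:ℝ)) :=
        mul_le_mul_of_nonneg_left hfinal (by positivity)
    _ = 32 * κ ^ 2 / ((N:ℝ) * ((N:ℝ) + 1) ^ 2) * R := by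
        field_simp
        ring
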